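/- arXiv:math/0404012 — 2 statements merged into one kernel-verified Lean document; each statement's English description precedes it below -/
import Mathlib

section
/- Let k ≥ 2, n ≥ 0 and 1 ≤ b ≤ k-1 be integers and set j = nk + b. With n₁ = ⌊(j-2)/k⌋ and n₂ = ⌊j/k⌋ (floor division in ℤ, so n₁ = -1 when j = 1), define Hmax(j,k) = (j-1)(n₁+1) - k·n₁(n₁+1)/2 and Wmax(j,k) = (j+1)·n₂ - k·n₂(n₂+1)/2. Then Hmax(j,k) + Wmax(j,k) = n²k + 2nb + b - 1. -/
/-- For `j = nk + b` with `k ≥ 2`, `n ≥ 0`, `1 ≤ b ≤ k-1`, the sum of the maximal height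
and maximal width equals `n²k + 2nb + b - 1`. -/
theorem stmt_2 (k n b j n₁ n₂ Hmax Wmax : ℤ) (hk : 2 ≤ k) (hn : 0 ≤ n)
    (hb1 : 1 ≤ b) (hb2 : b ≤ k - 1) (hj : j = n * k + b)
    (hn₁ : n₁ = (j - 2) / k) (hn₂ : n₂ = j / k)
    (hH : Hmax = (j - 1) * (n₁ + 1) - k * (n₁ * (n₁ + 1)) / 2)
    (hW : Wmax = (j + 1) * n₂ - k * (n₂ * (n₂ + 1)) / 2) :
    Hmax + Wmax = n ^ 2 * k + 2 * n * b + b - 1 := by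
  have hk0 : k ≠ 0 := by omega
  have e1 : 2 * (k * (n₁ * (n₁ + 1)) / 2) = k * (n₁ * (n₁ + 1)) :=
    Int.mul_ediv_cancel' ((Int.even_mul_succ_self n₁).two_dvd.mul_left k)
  have e2 : 2 * (k * (n₂ * (n₂ + 1)) / 2) = k * (n₂ * (n₂ + 1)) :=
    Int.mul_ediv_cancel' ((Int.even_mul_succ_self n₂).two_dvd.mul_left k)
  have hn2' : n₂ = n := by
    rw [hn₂, hj, show n * k + b = b + n * k from by ring,
      Int.add_mul_ediv_right _ _ hk0, Int.ediv_eq_zero_of_lt (by omega) (by omega)]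
    ring
  rcases eq_or_lt_of_le hb1 with hb | hb
  · -- b = 1
    have hn1' : n₁ = n - 1 := by
      rw [hn₁, hj, ← hb, show n * k + 1 - 2 = (k - 1) + (n - 1) * k from by ring,
        Int.add_mul_ediv_right _ _ hk0, Int.ediv_eq_zero_of_lt (by omega) (by omega)]
      ring
    rw [hn1'] at hH e1; rw [hn2'] at hW e2
    have h2 : 2 * (Hmax + Wmax) = 2 * (n ^ 2 * k + 2 * n * b + b - 1) := by
      linear_combination 2 * hH + 2 * hW - e1 - e2 + 4 * n * hj + 2 * hb
    linarith
  · -- b ≥ 2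
    have hn1' : n₁ = n := by
      rw [hn₁, hj, show n * k + b - 2 = (b - 2) + n * k from by ring,
        Int.add_mul_ediv_right _ _ hk0, Int.ediv_eq_zero_of_lt (by omega) (by omega)]
      ring
    rw [hn1'] at hH e1; rw [hn2'] at hW e2
    have h2 : 2 * (Hmax + Wmax) = 2 * (n ^ 2 * k + 2 * n * b + b - 1) := by
      linear_combination 2 * hH + 2 * hW - e1 - e2 + (4 * n + 2) * hj
    linarith
end

section
/- Let k ≥ 2 and n ≥ 1 be integers and set j = nk. With n₁ = ⌊(j-2)/k⌋ and n₂ = ⌊j/k⌋ (floor division in ℤ), define Hmax(j,k) = (j-1)(n₁+1) - k·n₁(n₁+1)/2 and Wmax(j,k) = (j+1)·n₂ - k·n₂(n₂+1)/2. Then Hmax(j,k) + Wmax(j,k) = n²k. -/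
/-- For `j = nk` with `k ≥ 2`, `n ≥ 1` (the instanton case), the sum of the maximal
height and maximal width equals `n²k`. -/
theorem stmt_3 (k n j n₁ n₂ Hmax Wmax : ℤ) (hk : 2 ≤ k) (hn : 1 ≤ n) (hj : j = n * k)
    (hn₁ : n₁ = (j - 2) / k) (hn₂ : n₂ = j / k)
    (hH : Hmax = (j - 1) * (n₁ + 1) - k * (n₁ * (n₁ + 1)) / 2)
    (hW : Wmax = (j + 1) * n₂ - k * (n₂ * (n₂ + 1)) / 2) :
    Hmax + Wmax = n ^ 2 * k := by
  have hk0 : k ≠ 0 := by omega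
  have h2 : n₂ = n := by
    rw [hn₂, hj, Int.mul_ediv_cancel _ hk0]
  have h1 : n₁ = n - 1 := by
    rw [hn₁, hj]
    have e : n * k - 2 = (k - 2) + (n - 1) * k := by ring
    rw [e, Int.add_mul_ediv_right _ _ hk0,
      Int.ediv_eq_zero_of_lt (by omega) (by omega)]
    ring
  rw [h1] at hH; rw [h2] at hW
  subst hj hH hW
  obtain ⟨a, ha⟩ : Even ((n - 1) * (n - 1 + 1)) := Int.even_mul_succ_self (n - 1)
  obtain ⟨b, hb⟩ : Even (n * (n + 1)) := Int.even_mul_succ_self n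
  rw [ha, hb]
  have h2a : (2 : ℤ) ≠ 0 := by norm_num
  have e1 : k * (a + a) / 2 = k * a := by rw [show a + a = 2 * a by ring, show k * (2*a) = 2*(k*a) by ring, Int.mul_ediv_cancel_left _ h2a]
  have e2 : k * (b + b) / 2 = k * b := by rw [show b + b = 2 * b by ring, show k * (2*b) = 2*(k*b) by ring, Int.mul_ediv_cancel_left _ h2a]
  rw [e1, e2]
  have hab : a + b = n ^ 2 := by nlinarith [ha, hb]
  nlinarith [hab]
end
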